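/- arXiv:2402.08385 — 2 statements merged into one kernel-verified Lean document; each statement's English description precedes it below -/
import Mathlib

section
/- For a complex semisimple Lie algebra g of rank n with invariant degrees d_1,...,d_n and a genus g ≥ 2 curve with D the divisor of a holomorphic differential, the total dimension ∑_{j=1}^n dim O(d_j D) equals dim(g)·(g - 1), provided all d_j ≥ 2. -/
open scoped BigOperators

/-- The degree of a divisor (a finitely supported `ℤ`-valued function on the
points of the curve). -/
noncomputable def divDeg {X : Type*} (E : X →₀ ℤ) : ℤ := E.sum fun _ n => n

lemma divDeg_eq_degree {X : Type*} (E : X →₀ ℤ) : divDeg E = Finsupp.degree E := rfl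

lemma divDeg_sub {X : Type*} (E F : X →₀ ℤ) : divDeg (E - F) = divDeg E - divDeg F := by
  simp only [divDeg_eq_degree, map_sub]

lemma divDeg_nsmul {X : Type*} (m : ℕ) (E : X →₀ ℤ) : divDeg (m • E) = m * divDeg E := by
  simp only [divDeg_eq_degree, map_nsmul, nsmul_eq_mul]

section RiemannRoch

variable {X : Type*} {g : ℕ} {ell : (X →₀ ℤ) → ℕ} {K : X →₀ ℤ}

/-- Above the canonical degree `2g - 2`, `K - E` has negative degree, so Riemann–Roch loses its
correction term. -/
lemma ell_eq_of_two_mul_sub_two_lt_divDeg (hdegK : divDeg K = 2 * (g : ℤ) - 2)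
    (hRR : ∀ E : X →₀ ℤ, (ell E : ℤ) - (ell (K - E) : ℤ) = divDeg E + 1 - g)
    (hvanish : ∀ E : X →₀ ℤ, divDeg E < 0 → ell E = 0)
    {E : X →₀ ℤ} (hE : 2 * (g : ℤ) - 2 < divDeg E) :
    (ell E : ℤ) = divDeg E + 1 - g := by
  have hKE : ell (K - E) = 0 := hvanish _ (by rw [divDeg_sub]; omega)
  simpa [hKE] using hRR E

lemma ell_nsmul_canonical (hdegK : divDeg K = 2 * (g : ℤ) - 2)
    (hRR : ∀ E : X →₀ ℤ, (ell E : ℤ) - (ell (K - E) : ℤ) = divDeg E + 1 - g)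
    (hvanish : ∀ E : X →₀ ℤ, divDeg E < 0 → ell E = 0)
    (hg : 2 ≤ g) {m : ℕ} (hm : 2 ≤ m) :
    ell (m • K) = (2 * m - 1) * (g - 1) := by
  have hdeg : divDeg (m • K) = m * (2 * (g : ℤ) - 2) := by rw [divDeg_nsmul, hdegK]
  have hlt : 2 * (g : ℤ) - 2 < divDeg (m • K) := by
    rw [hdeg]
    nlinarith [(by exact_mod_cast hm : (2 : ℤ) ≤ m), (by exact_mod_cast hg : (2 : ℤ) ≤ g)]
  have hell := ell_eq_of_two_mul_sub_two_lt_divDeg hdegK hRR hvanish hlt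
  rw [hdeg] at hell
  zify [(by omega : 1 ≤ 2 * m), (by omega : 1 ≤ g)]
  linear_combination hell

end RiemannRoch

theorem sum_dim_riemannRoch_eq_dim_lieAlgebra_general
    (𝔤 : Type*) [LieRing 𝔤] [LieAlgebra ℂ 𝔤]
    (n : ℕ)
    (d : Fin n → ℕ) (hd : ∀ j, 2 ≤ d j)
    (hKostant : ∑ j, (2 * d j - 1) = Module.finrank ℂ 𝔤)
    (X : Type*) (g : ℕ) (hg : 2 ≤ g)
    (ell : (X →₀ ℤ) → ℕ) (K : X →₀ ℤ)
    (hdegK : divDeg K = 2 * (g : ℤ) - 2)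
    (hRR : ∀ E : X →₀ ℤ, (ell E : ℤ) - (ell (K - E) : ℤ) = divDeg E + 1 - g)
    (hvanish : ∀ E : X →₀ ℤ, divDeg E < 0 → ell E = 0) :
    ∑ j, ell (d j • K) = Module.finrank ℂ 𝔤 * (g - 1) := by
  calc ∑ j, ell (d j • K) = ∑ j, (2 * d j - 1) * (g - 1) :=
        Finset.sum_congr rfl fun j _ => ell_nsmul_canonical hdegK hRR hvanish hg (hd j)
    _ = Module.finrank ℂ 𝔤 * (g - 1) := by rw [← Finset.sum_mul, hKostant]

/-- For a complex semisimple Lie algebra `𝔤` of rank `n` with invariant degrees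
`d 1, …, d n` (so that Kostant's identity `∑ (2 d j - 1) = dim 𝔤` holds), and a
genus `g ≥ 2` curve with `K = (ξ)` the divisor of a holomorphic differential
(so `ell (d j • K) = dim O(d j • K)` is governed by Riemann–Roch), the total
dimension `∑ j, dim O(d j • K)` equals `dim 𝔤 · (g - 1)`, provided all `d j ≥ 2`. -/
theorem sum_dim_riemannRoch_eq_dim_lieAlgebra
    (𝔤 : Type*) [LieRing 𝔤] [LieAlgebra ℂ 𝔤] [FiniteDimensional ℂ 𝔤]
    [LieAlgebra.IsSemisimple ℂ 𝔤]
    (n : ℕ) (hn : n = LieAlgebra.rank ℂ 𝔤)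
    (d : Fin n → ℕ) (hd : ∀ j, 2 ≤ d j)
    (hKostant : ∑ j, (2 * d j - 1) = Module.finrank ℂ 𝔤)
    (X : Type*) (g : ℕ) (hg : 2 ≤ g)
    (ell : (X →₀ ℤ) → ℕ) (K : X →₀ ℤ)
    (hdegK : divDeg K = 2 * (g : ℤ) - 2)
    (hRR : ∀ E : X →₀ ℤ, (ell E : ℤ) - (ell (K - E) : ℤ) = divDeg E + 1 - g)
    (hvanish : ∀ E : X →₀ ℤ, divDeg E < 0 → ell E = 0) :
    ∑ j, ell (d j • K) = Module.finrank ℂ 𝔤 * (g - 1) :=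
  sum_dim_riemannRoch_eq_dim_lieAlgebra_general 𝔤 n d hd hKostant X g hg ell K hdegK hRR hvanish
end

section
/- Let F_1,...,F_h be smooth functions and suppose H_1(λ,x),...,H_h(λ,x) of variables (λ_1,...,λ_h,x_1,...,x_h) are implicitly defined by the separated system F_i(H_1,...,H_h, λ_i, x_i) = 0, i = 1,...,h, with the Jacobian ∂(F_1,...,F_h)/∂(H_1,...,H_h) invertible. Define a Poisson bracket {f,g} = ∑_j p_j(λ_j,x_j)(∂f/∂λ_j · ∂g/∂x_j − ∂g/∂λ_j · ∂f/∂x_j). Then {H_a, H_b} = 0 for all a, b. -/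
/-!
Only the `j`-th separated relation involves `(λ_j, x_j)`. Differentiating the relations along
`λ_j` (resp. `x_j`) therefore gives `J ∂H/∂λ_j = -(∂F_j/∂λ_j) e_j` and
`J ∂H/∂x_j = -(∂F_j/∂x_j) e_j`, so both `∂H/∂λ_j` and `∂H/∂x_j` are multiples of the `j`-th
column of `J⁻¹`, and every term `∂H_a/∂λ_j ∂H_b/∂x_j - ∂H_b/∂λ_j ∂H_a/∂x_j` of the bracket is a
vanishing `2 × 2` minor.
-/

open Filter Topology ContinuousLinearMap Matrix

section ImplicitDifferentiation

variable {𝕜 : Type*} [NontriviallyNormedField 𝕜]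
  {E F G W : Type*} [NormedAddCommGroup E] [NormedSpace 𝕜 E] [NormedAddCommGroup F]
  [NormedSpace 𝕜 F] [NormedAddCommGroup G] [NormedSpace 𝕜 G] [NormedAddCommGroup W]
  [NormedSpace 𝕜 W]

theorem fderiv_apply_fderiv_prodMk_eq_zero_of_eventually_eq_zero {Φ : F × G → W} {H : E → F}
    {ℓ : E →L[𝕜] G} {q : E} (hΦ : DifferentiableAt 𝕜 Φ (H q, ℓ q)) (hH : DifferentiableAt 𝕜 H q)
    (h0 : ∀ᶠ y in 𝓝 q, Φ (H y, ℓ y) = 0) (w : E) :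
    fderiv 𝕜 Φ (H q, ℓ q) (fderiv 𝕜 H q w, ℓ w) = 0 := by
  have hcomp : HasFDerivAt (fun y => Φ (H y, ℓ y)) ((fderiv 𝕜 Φ (H q, ℓ q)).comp
      ((fderiv 𝕜 H q).prod ℓ)) q :=
    hΦ.hasFDerivAt.comp q (hH.hasFDerivAt.prodMk ℓ.hasFDerivAt)
  have hzero : HasFDerivAt (fun y => Φ (H y, ℓ y)) (0 : E →L[𝕜] W) q :=
    (hasFDerivAt_const 0 q).congr_of_eventuallyEq h0
  simpa using congrArg (· w) (hcomp.unique hzero)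

theorem fderiv_comp_prodMk_left {Φ : F × G → W} {a : F} {b : G}
    (hΦ : DifferentiableAt 𝕜 Φ (a, b)) :
    fderiv 𝕜 (fun v => Φ (v, b)) a = (fderiv 𝕜 Φ (a, b)).comp (inl 𝕜 F G) :=
  (hΦ.hasFDerivAt.comp a (hasFDerivAt_prodMk_left a b)).fderiv

end ImplicitDifferentiation

theorem Matrix.of_apply_single_mulVec {R m n : Type*} [CommSemiring R] [Fintype n]
    [DecidableEq n]
    (L : m → (n → R) →ₗ[R] R) (u : n → R) :
    Matrix.of (fun i c => L i (Pi.single c 1)) *ᵥ u = fun i => L i u :=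
  LinearMap.toMatrix'_mulVec (LinearMap.pi L) u

theorem Matrix.mul_sub_mul_eq_zero_of_mulVec_eq_single {R n : Type*} [CommRing R] [Fintype n]
    [DecidableEq n] {M : Matrix n n R} (hM : IsUnit M) {u v : n → R} {j : n} {s t : R}
    (hu : M *ᵥ u = Pi.single j s) (hv : M *ᵥ v = Pi.single j t) (a b : n) :
    u a * v b - u b * v a = 0 := by
  obtain ⟨M, rfl⟩ := hM
  have hsolve : ∀ {w : n → R} {x : R}, ↑M *ᵥ w = Pi.single j x →
      ∀ c, w c = (↑M⁻¹ : Matrix n n R) c j * x := by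
    intro w x hw c
    have : w = (↑M⁻¹ : Matrix n n R) *ᵥ Pi.single j x := by
      rw [← hw, Matrix.mulVec_mulVec, M.inv_mul, Matrix.one_mulVec]
    simp [this, mul_comm]
  rw [hsolve hu a, hsolve hu b, hsolve hv a, hsolve hv b]
  ring

section SeparatedSystem

variable {ι : Type*} [Fintype ι] [DecidableEq ι] (F : ι → (ι → ℝ) → ℝ → ℝ → ℝ)
  (H : (ι → ℝ) × (ι → ℝ) → ι → ℝ) (q : (ι → ℝ) × (ι → ℝ))

abbrev separatedRelation (i : ι) : (ι → ℝ) × ℝ × ℝ → ℝ := fun p => F i p.1 p.2.1 p.2.2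

noncomputable def separatedJacobian : Matrix ι ι ℝ :=
  Matrix.of fun i a => fderiv ℝ (fun v => F i v (q.1 i) (q.2 i)) (H q) (Pi.single a 1)

theorem separatedJacobian_mulVec_fderiv_single
    (hF : ∀ i, DifferentiableAt ℝ (separatedRelation F i) (H q, q.1 i, q.2 i))
    (hH : DifferentiableAt ℝ H q) (hsep : ∀ᶠ y in 𝓝 q, ∀ i, F i (H y) (y.1 i) (y.2 i) = 0)
    (j : ι) (s t : ℝ) :
    separatedJacobian F H q *ᵥ fderiv ℝ H q (Pi.single j s, Pi.single j t) =
      Pi.single j (-fderiv ℝ (separatedRelation F j) (H q, q.1 j, q.2 j) (0, s, t)) := by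
  ext i
  set D := fderiv ℝ (separatedRelation F i) (H q, q.1 i, q.2 i)
  let ℓ : ((ι → ℝ) × (ι → ℝ)) →L[ℝ] ℝ × ℝ :=
    ((proj i).comp (fst ℝ _ _)).prod ((proj i).comp (snd ℝ _ _))
  have h0 : D (fderiv ℝ H q (Pi.single j s, Pi.single j t), ℓ (Pi.single j s, Pi.single j t)) = 0 :=
    fderiv_apply_fderiv_prodMk_eq_zero_of_eventually_eq_zero (ℓ := ℓ) (hF i) hH
      (hsep.mono fun y hy => hy i) _
  rw [← D.comp_inl_add_comp_inr, ← fderiv_comp_prodMk_left (hF i)] at h0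
  have hrow : (separatedJacobian F H q *ᵥ fderiv ℝ H q (Pi.single j s, Pi.single j t)) i =
      fderiv ℝ (fun v => F i v (q.1 i) (q.2 i)) (H q)
        (fderiv ℝ H q (Pi.single j s, Pi.single j t)) :=
    congrFun (Matrix.of_apply_single_mulVec
      (fun i => (fderiv ℝ (fun v => F i v (q.1 i) (q.2 i)) (H q) : (ι → ℝ) →ₗ[ℝ] ℝ)) _) i
  rw [hrow, eq_neg_of_add_eq_zero_left h0]
  rcases eq_or_ne i j with rfl | hij
  · simp [ℓ, D]
  · simp [ℓ, hij, Prod.mk_zero_zero]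

end SeparatedSystem

/-- **Involutivity of Hamiltonians defined by separated equations**
(Stäckel-type commutativity).  Let `F 1, …, F h` be `C¹` functions, where
`F i` depends on `(H₁, …, H_h)` and on the single pair `(λ_i, x_i)`, and let
`H = (H 1, …, H h)` be implicitly defined on an open set `U` by the separated
system `F i (H, λ_i, x_i) = 0`, `i = 1, …, h`, the Jacobian `(∂F_i/∂H_a)` being
invertible on `U`.  For any functions `p j (λ_j, x_j)` define the Poisson
bracket `{f, g} = ∑_j p_j (∂f/∂λ_j ∂g/∂x_j − ∂g/∂λ_j ∂f/∂x_j)`.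
Then `{H a, H b} = 0` on `U` for all `a, b`. -/
theorem separated_hamiltonians_commute
    (h : ℕ) (F : Fin h → (Fin h → ℝ) → ℝ → ℝ → ℝ)
    (hF : ∀ i, ContDiff ℝ 1 (fun p : (Fin h → ℝ) × ℝ × ℝ => F i p.1 p.2.1 p.2.2))
    (U : Set ((Fin h → ℝ) × (Fin h → ℝ))) (hU : IsOpen U)
    (H : ((Fin h → ℝ) × (Fin h → ℝ)) → (Fin h → ℝ))
    (hHdiff : ∀ a, DifferentiableOn ℝ (fun q => H q a) U)
    (hsep : ∀ q ∈ U, ∀ i, F i (H q) (q.1 i) (q.2 i) = 0)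
    (hJ : ∀ q ∈ U, IsUnit (Matrix.of fun i a : Fin h =>
      fderiv ℝ (fun v => F i v (q.1 i) (q.2 i)) (H q) (Pi.single a 1)))
    (p : Fin h → ℝ → ℝ → ℝ) :
    ∀ q ∈ U, ∀ a b : Fin h,
      ∑ j, p j (q.1 j) (q.2 j) *
        (fderiv ℝ (fun y => H y a) q ((Pi.single j 1 : Fin h → ℝ), (0 : Fin h → ℝ))
            * fderiv ℝ (fun y => H y b) q ((0 : Fin h → ℝ), (Pi.single j 1 : Fin h → ℝ))
          - fderiv ℝ (fun y => H y b) q ((Pi.single j 1 : Fin h → ℝ), (0 : Fin h → ℝ))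
            * fderiv ℝ (fun y => H y a) q ((0 : Fin h → ℝ), (Pi.single j 1 : Fin h → ℝ)))
        = 0 := by
  intro q hq a b
  have hUq : U ∈ 𝓝 q := hU.mem_nhds hq
  have hHq : DifferentiableAt ℝ H q :=
    differentiableAt_pi.2 fun c => (hHdiff c).differentiableAt hUq
  have hFq : ∀ i, DifferentiableAt ℝ (separatedRelation F i) (H q, q.1 i, q.2 i) := fun i =>
    ((hF i).differentiable one_ne_zero).differentiableAt
  have hJq := separatedJacobian_mulVec_fderiv_single F H q hFq hHq
    (eventually_of_mem hUq hsep)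
  refine Finset.sum_eq_zero fun j _ => ?_
  have hlam := hJq j 1 0
  have hx := hJq j 0 1
  rw [Pi.single_zero] at hlam hx
  simp only [fderiv_apply hHq, ContinuousLinearMap.comp_apply, proj_apply]
  rw [Matrix.mul_sub_mul_eq_zero_of_mulVec_eq_single (hJ q hq) hlam hx, mul_zero]
end
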